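/- arXiv:2412.20115 — 2 statements merged into one kernel-verified Lean document; each statement's English description precedes it below -/
import Mathlib

section
/- Let f : E → ℝ be differentiable, convex, and L-smooth with L > 0, let g : E → ℝ be convex and continuous, let 0 < λ ≤ 1/L, and let x* ∈ E be a global minimizer of F = f + g. Let x : ℕ → E be a sequence such that for every k, x_{k+1} is a global minimizer over y ∈ E of y ↦ (1/(2λ))·‖y - (x_k - λ·∇f(x_k))‖² + g(y). Then for every n ≥ 1, F(x_n) - F(x*) ≤ (1/(2nλ))·‖x_0 - x*‖². -/
/-!
The descent lemma bounds `f (x_{k+1})` by the quadratic model of `f` at `x_k` with curvature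
`L ≤ 1/λ`; adding `g` turns the model into the proximal objective, which is `1/λ`-strongly convex,
so its minimizer `x_{k+1}` beats every `z` by `‖z - x_{k+1}‖² / (2λ)`; the gradient inequality of
`f` at `x_k` then gives the three-point inequality
`F(x_{k+1}) + ‖z - x_{k+1}‖² / (2λ) ≤ F(z) + ‖z - x_k‖² / (2λ)`.
With `z = x_k` this makes `F(x_k)` nonincreasing, and with `z = x*` the right-hand distances
telescope, so `n (F(x_n) - F(x*)) ≤ ‖x_0 - x*‖² / (2λ)`.
-/

open RealInnerProductSpace

open Set AffineMap Filter Topology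

lemma le_add_deriv_add_half_of_deriv_le {ψ ψ' : ℝ → ℝ} {c : ℝ}
    (hψ : ∀ t, HasDerivAt ψ (ψ' t) t) (hψ' : ∀ t ∈ Ioo (0 : ℝ) 1, ψ' t ≤ ψ' 0 + c * t) :
    ψ 1 ≤ ψ 0 + ψ' 0 + c / 2 := by
  set φ : ℝ → ℝ := fun t => ψ t - ψ' 0 * t - c / 2 * t ^ 2
  have hφ : ∀ t, HasDerivAt φ (ψ' t - ψ' 0 - c * t) t := fun t =>
    (((hψ t).sub ((hasDerivAt_id t).const_mul (ψ' 0))).sub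
      ((hasDerivAt_pow 2 t).const_mul (c / 2))).congr_deriv (by simp only [mul_one, Nat.cast_ofNat, Nat.add_one_sub_one, pow_one]; ring)
  have hanti : AntitoneOn φ (Icc 0 1) :=
    antitoneOn_of_hasDerivWithinAt_nonpos (convex_Icc 0 1)
      (fun t _ => (hφ t).continuousAt.continuousWithinAt) (fun t _ => (hφ t).hasDerivWithinAt)
      (fun t ht => by rw [interior_Icc] at ht; linarith [hψ' t ht])
  have := hanti (left_mem_Icc.2 zero_le_one) (right_mem_Icc.2 zero_le_one) zero_le_one
  simp only [φ] at this
  linarith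

section Gradient

variable {E : Type*} [NormedAddCommGroup E] [InnerProductSpace ℝ E] [CompleteSpace E]
  {f : E → ℝ} {f' : E → E}

lemma HasGradientAt.hasDerivAt_comp_lineMap {g x y : E} {t : ℝ}
    (hf : HasGradientAt f g (lineMap x y t)) :
    HasDerivAt (fun s => f (lineMap x y s)) ⟪g, y - x⟫ t :=
  hf.hasFDerivAt.comp_hasDerivAt t hasDerivAt_lineMap

lemma ConvexOn.add_inner_le_of_hasGradientAt {g x : E} (hf : ConvexOn ℝ univ f)
    (hx : HasGradientAt f g x) (z : E) : f x + ⟪g, z - x⟫ ≤ f z := by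
  have hline : ConvexOn ℝ univ (fun t : ℝ => f (lineMap x z t)) := hf.comp_affineMap _
  have hderiv : HasDerivAt (fun t : ℝ => f (lineMap x z t)) ⟪g, z - x⟫ 0 :=
    HasGradientAt.hasDerivAt_comp_lineMap (by simpa using hx)
  have := hline.le_slope_of_hasDerivAt (mem_univ 0) (mem_univ 1) zero_lt_one hderiv
  simp only [slope_def_field, lineMap_apply_one, lineMap_apply_zero, sub_zero, div_one] at this
  linarith

lemma le_add_inner_add_sq_of_lipschitz_gradient {L : ℝ} (hf : ∀ x, HasGradientAt f (f' x) x)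
    (hL : ∀ x y, ‖f' x - f' y‖ ≤ L * ‖x - y‖) (x y : E) :
    f y ≤ f x + ⟪f' x, y - x⟫ + L / 2 * ‖y - x‖ ^ 2 := by
  have hψ : ∀ t, HasDerivAt (fun s => f (lineMap x y s)) ⟪f' (lineMap x y t), y - x⟫ t :=
    fun t => (hf _).hasDerivAt_comp_lineMap
  have := le_add_deriv_add_half_of_deriv_le hψ (c := L * ‖y - x‖ ^ 2) fun t ht => by
    have hdist : ‖lineMap x y t - x‖ = t * ‖y - x‖ := by
      rw [← vsub_eq_sub, lineMap_vsub_left, norm_smul, Real.norm_of_nonneg ht.1.le, vsub_eq_sub]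
    rw [lineMap_apply_zero]
    calc ⟪f' (lineMap x y t), y - x⟫
        = ⟪f' x, y - x⟫ + ⟪f' (lineMap x y t) - f' x, y - x⟫ := by rw [inner_sub_left]; ring
      _ ≤ ⟪f' x, y - x⟫ + ‖f' (lineMap x y t) - f' x‖ * ‖y - x‖ := by
          gcongr; exact real_inner_le_norm _ _
      _ ≤ ⟪f' x, y - x⟫ + L * ‖lineMap x y t - x‖ * ‖y - x‖ := by
          gcongr; exact hL _ _
      _ = ⟪f' x, y - x⟫ + L * ‖y - x‖ ^ 2 * t := by rw [hdist]; ring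
  simp only [lineMap_apply_zero, lineMap_apply_one] at this
  linarith

end Gradient

section StrongConvexity

variable {E : Type*} [NormedAddCommGroup E] [InnerProductSpace ℝ E]

lemma strongConvexOn_univ_sq_norm_sub (m : ℝ) (v : E) :
    StrongConvexOn univ m fun y => m / 2 * ‖y - v‖ ^ 2 := by
  rw [strongConvexOn_iff_convex]
  have haffine : (fun y => m / 2 * ‖y - v‖ ^ 2 - m / 2 * ‖y‖ ^ 2)
      = fun y => (innerSL ℝ (-m • v)) y + m / 2 * ‖v‖ ^ 2 := by
    ext y
    rw [norm_sub_sq_real, innerSL_apply_apply, inner_smul_left, real_inner_comm]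
    simp only [Real.ringHom_apply, neg_mul]; ring
  rw [haffine]
  exact ((innerSL ℝ (-m • v)).toLinearMap.convexOn convex_univ).add_const _

lemma StrongConvexOn.add_convexOn {s : Set E} {m : ℝ} {h g : E → ℝ}
    (hh : StrongConvexOn s m h) (hg : ConvexOn ℝ s g) : StrongConvexOn s m (h + g) := by
  simpa [StrongConvexOn, Pi.add_def] using hh.add (strongConvexOn_zero.2 hg)

lemma StrongConvexOn.add_sq_le_of_isMinOn {m : ℝ} {h : E → ℝ} {u : E}
    (hh : StrongConvexOn univ m h) (hu : IsMinOn h univ u) (z : E) :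
    h u + m / 2 * ‖z - u‖ ^ 2 ≤ h z := by
  set q := m / 2 * ‖z - u‖ ^ 2
  -- compare `u` with points of the segment `[u, z]`, divide by the step `t` and let `t → 0`
  have hsegment : ∀ t ∈ Ioo (0 : ℝ) 1, h u + (1 - t) * q ≤ h z := by
    intro t ⟨ht0, ht1⟩
    have hconv := hh.2 (mem_univ u) (mem_univ z) (sub_nonneg.2 ht1.le) ht0.le (sub_add_cancel 1 t)
    have hmin : h u ≤ h ((1 - t) • u + t • z) := hu (mem_univ _)
    rw [norm_sub_rev] at hconv
    simp only [smul_eq_mul] at hconv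
    have : t * (h u + (1 - t) * q) ≤ t * h z := by linear_combination hmin.trans hconv
    exact le_of_mul_le_mul_left this ht0
  have hlim : Tendsto (fun t : ℝ => h u + (1 - t) * q) (𝓝[>] 0) (𝓝 (h u + q)) := by
    have hcont : Continuous fun t : ℝ => h u + (1 - t) * q := by fun_prop
    simpa using (hcont.tendsto 0).mono_left nhdsWithin_le_nhds
  exact le_of_tendsto hlim (eventually_of_mem (Ioo_mem_nhdsGT zero_lt_one) hsegment)

end StrongConvexity

section ProxGrad

variable {E : Type*} [NormedAddCommGroup E] [InnerProductSpace ℝ E]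

def IsProxGradStep (f' : E → E) (g : E → ℝ) (lam : ℝ) (x u : E) : Prop :=
  ∀ y, 1 / (2 * lam) * ‖u - (x - lam • f' x)‖ ^ 2 + g u ≤
    1 / (2 * lam) * ‖y - (x - lam • f' x)‖ ^ 2 + g y

lemma IsProxGradStep.add_sq_le [CompleteSpace E] {f g : E → ℝ} {f' : E → E} {L lam : ℝ}
    {x u : E} (hu : IsProxGradStep f' g lam x u)
    (hdiff : ∀ x, HasGradientAt f (f' x) x) (hfconv : ConvexOn ℝ univ f)
    (hsmooth : ∀ x y, ‖f' x - f' y‖ ≤ L * ‖x - y‖) (hgconv : ConvexOn ℝ univ g)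
    (hlam : 0 < lam) (hLlam : L ≤ 1 / lam) (z : E) :
    f u + g u + 1 / (2 * lam) * ‖z - u‖ ^ 2 ≤ f z + g z + 1 / (2 * lam) * ‖z - x‖ ^ 2 := by
  set v := x - lam • f' x
  have hhalf : 1 / (2 * lam) = 1 / lam / 2 := by ring
  unfold IsProxGradStep at hu
  rw [hhalf] at hu ⊢
  have hprox := ((strongConvexOn_univ_sq_norm_sub (1 / lam) v).add_convexOn hgconv)
    |>.add_sq_le_of_isMinOn (fun y _ => hu y) z
  simp only [Pi.add_apply] at hprox
  have hexpand : ∀ y, 1 / lam / 2 * ‖y - v‖ ^ 2 =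
      1 / lam / 2 * ‖y - x‖ ^ 2 + ⟪f' x, y - x⟫ + lam / 2 * ‖f' x‖ ^ 2 := fun y => by
    have : y - v = (y - x) + lam • f' x := by simp only [v]; abel
    rw [this, norm_add_sq_real, inner_smul_right, norm_smul, Real.norm_of_nonneg hlam.le,
      real_inner_comm]
    field_simp
  have hdesc := le_add_inner_add_sq_of_lipschitz_gradient hdiff hsmooth x u
  have hconv := hfconv.add_inner_le_of_hasGradientAt (hdiff x) z
  have hL : L / 2 * ‖u - x‖ ^ 2 ≤ 1 / lam / 2 * ‖u - x‖ ^ 2 := by gcongr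
  linarith [hexpand u, hexpand z]

end ProxGrad

lemma nat_mul_le_sub_of_antitone_of_le_sub {a d : ℕ → ℝ} (ha : Antitone a)
    (hstep : ∀ k, a (k + 1) ≤ d k - d (k + 1)) (n : ℕ) : n * a n ≤ d 0 - d n := by
  calc n * a n = ∑ _k ∈ Finset.range n, a n := by simp
    _ ≤ ∑ k ∈ Finset.range n, a (k + 1) :=
        Finset.sum_le_sum fun k hk => ha (Finset.mem_range.1 hk)
    _ ≤ ∑ k ∈ Finset.range n, (d k - d (k + 1)) := Finset.sum_le_sum fun k _ => hstep k
    _ = d 0 - d n := Finset.sum_range_sub' d n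

theorem prox_gd_convergence_general {E : Type*} [NormedAddCommGroup E]
    [InnerProductSpace ℝ E] [CompleteSpace E]
    (f g : E → ℝ) (f' : E → E) (L : ℝ) (hL : 0 < L)
    (hdiff : ∀ x, HasGradientAt f (f' x) x)
    (hfconv : ConvexOn ℝ Set.univ f)
    (hsmooth : ∀ x y, ‖f' x - f' y‖ ≤ L * ‖x - y‖)
    (hgconv : ConvexOn ℝ Set.univ g)
    (lam : ℝ) (hlam : 0 < lam) (hlamL : lam ≤ 1 / L)
    (F : E → ℝ) (hF : F = fun y => f y + g y)
    (xstar : E)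
    (x : ℕ → E)
    (hiter : ∀ k, ∀ y : E,
      (1 / (2 * lam)) * ‖x (k + 1) - (x k - lam • f' (x k))‖ ^ 2 + g (x (k + 1)) ≤
        (1 / (2 * lam)) * ‖y - (x k - lam • f' (x k))‖ ^ 2 + g y) :
    ∀ n : ℕ, 1 ≤ n →
      F (x n) - F xstar ≤ (1 / (2 * n * lam)) * ‖x 0 - xstar‖ ^ 2 := by
  intro n hn
  subst hF
  have hstep := fun k => IsProxGradStep.add_sq_le (hiter k) hdiff hfconv hsmooth hgconv hlam
    ((le_one_div hlam hL).1 hlamL)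
  have hanti : Antitone fun k => f (x k) + g (x k) - (f xstar + g xstar) :=
    antitone_nat_of_succ_le fun k => by
      have hdecrease := hstep k (x k)
      simp only [sub_self, norm_zero] at hdecrease
      have : 0 ≤ 1 / (2 * lam) * ‖x k - x (k + 1)‖ ^ 2 := by positivity
      linarith
  have hrate := nat_mul_le_sub_of_antitone_of_le_sub hanti
    (d := fun k => 1 / (2 * lam) * ‖xstar - x k‖ ^ 2) (fun k => by linarith [hstep k xstar]) n
  have hn' : (0 : ℝ) < n := by exact_mod_cast hn
  have : 0 ≤ 1 / (2 * lam) * ‖xstar - x n‖ ^ 2 := by positivity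
  rw [show 1 / (2 * n * lam) * ‖x 0 - xstar‖ ^ 2 = 1 / (2 * lam) * ‖xstar - x 0‖ ^ 2 / n by
    rw [norm_sub_rev]; field_simp, le_div_iff₀ hn']
  linarith

theorem prox_gd_convergence {E : Type*} [NormedAddCommGroup E]
    [InnerProductSpace ℝ E] [CompleteSpace E]
    (f g : E → ℝ) (f' : E → E) (L : ℝ) (hL : 0 < L)
    (hdiff : ∀ x, HasGradientAt f (f' x) x)
    (hfconv : ConvexOn ℝ Set.univ f)
    (hsmooth : ∀ x y, ‖f' x - f' y‖ ≤ L * ‖x - y‖)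
    (hgconv : ConvexOn ℝ Set.univ g) (hgcont : Continuous g)
    (lam : ℝ) (hlam : 0 < lam) (hlamL : lam ≤ 1 / L)
    (F : E → ℝ) (hF : F = fun y => f y + g y)
    (xstar : E) (hmin : ∀ y, F xstar ≤ F y)
    (x : ℕ → E)
    (hiter : ∀ k, ∀ y : E,
      (1 / (2 * lam)) * ‖x (k + 1) - (x k - lam • f' (x k))‖ ^ 2 + g (x (k + 1)) ≤
        (1 / (2 * lam)) * ‖y - (x k - lam • f' (x k))‖ ^ 2 + g y) :
    ∀ n : ℕ, 1 ≤ n →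
      F (x n) - F xstar ≤ (1 / (2 * n * lam)) * ‖x 0 - xstar‖ ^ 2 :=
  prox_gd_convergence_general f g f' L hL hdiff hfconv hsmooth hgconv lam hlam hlamL F hF xstar x
    hiter
end

section
/- Let f : E → ℝ be differentiable, L-smooth, and μ-strongly convex with 0 < μ ≤ L, let g : E → ℝ be convex and continuous, let 0 < λ ≤ 1/L, and let x* ∈ E be a global minimizer of F = f + g. Let x_k ∈ E and let x_{k+1} be a global minimizer over y ∈ E of y ↦ (1/(2λ))·‖y - (x_k - λ·∇f(x_k))‖² + g(y). Then F(x_{k+1}) - F(x*) ≤ (1 + λμ/4)⁻¹·(F(x_k) - F(x*)). -/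
/-!
The prox objective `y ↦ ‖y - z‖² / (2λ) + g y` is `1/λ`-strongly convex, so its minimiser
`x⁺ = x_{k+1}` satisfies the three-point inequality. Together with the descent lemma (valid since
`λL ≤ 1`) it gives, for every `y`,
`F x⁺ + ‖y - x⁺‖² / (2λ) ≤ f x + ⟪∇f x, y - x⟫ + g y + ‖y - x‖² / (2λ)`.
Taking `y = x + λμ (x* - x)` and using convexity of `g` and strong convexity of `f` between
`x = x_k` and `x*`, the quadratic terms cancel and `F x⁺ - F x* ≤ (1 - λμ) (F x - F x*)`;
finally `1 - λμ ≤ (1 + λμ/4)⁻¹`.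
-/

open RealInnerProductSpace Set Filter Topology

section

variable {E : Type*} [NormedAddCommGroup E] [InnerProductSpace ℝ E]

lemma hasDerivAt_comp_add_smul [CompleteSpace E] {f : E → ℝ} {f' : E → E}
    (hf : ∀ x, HasGradientAt f (f' x) x) (x v : E) (t : ℝ) :
    HasDerivAt (fun t : ℝ => f (x + t • v)) ⟪f' (x + t • v), v⟫ t := by
  have hline : HasDerivAt (fun t : ℝ => x + t • v) v t := by
    simpa using ((hasDerivAt_id t).smul_const v).const_add x
  have := (hasGradientAt_iff_hasFDerivAt.mp (hf (x + t • v))).comp_hasDerivAt t hline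
  rwa [InnerProductSpace.toDual_apply_apply] at this

lemma le_add_inner_add_of_lipschitz_gradient [CompleteSpace E] {f : E → ℝ} {f' : E → E} {L : ℝ}
    (hf : ∀ x, HasGradientAt f (f' x) x) (hL : ∀ x y, ‖f' x - f' y‖ ≤ L * ‖x - y‖) (x y : E) :
    f y ≤ f x + ⟪f' x, y - x⟫ + L / 2 * ‖y - x‖ ^ 2 := by
  set v := y - x
  have hB : ∀ t : ℝ, HasDerivAt (fun t : ℝ => f x + t * ⟪f' x, v⟫ + L / 2 * t ^ 2 * ‖v‖ ^ 2)
      (⟪f' x, v⟫ + L * t * ‖v‖ ^ 2) t := fun t => by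
    refine ((((hasDerivAt_id t).mul_const ⟪f' x, v⟫).const_add (f x)).add
      (((hasDerivAt_pow 2 t).const_mul (L / 2)).mul_const (‖v‖ ^ 2))).congr_deriv ?_
    simp only [one_mul, Nat.cast_ofNat]; ring
  have hbound : ∀ t ∈ Ico (0 : ℝ) 1, ⟪f' (x + t • v), v⟫ ≤ ⟪f' x, v⟫ + L * t * ‖v‖ ^ 2 := by
    rintro t ⟨ht, -⟩
    calc ⟪f' (x + t • v), v⟫ = ⟪f' x, v⟫ + ⟪f' (x + t • v) - f' x, v⟫ := by
          rw [inner_sub_left]; ring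
      _ ≤ ⟪f' x, v⟫ + ‖f' (x + t • v) - f' x‖ * ‖v‖ := by gcongr; exact real_inner_le_norm _ _
      _ ≤ ⟪f' x, v⟫ + L * ‖t • v‖ * ‖v‖ := by
          gcongr; simpa using hL (x + t • v) x
      _ = ⟪f' x, v⟫ + L * t * ‖v‖ ^ 2 := by rw [norm_smul, Real.norm_of_nonneg ht]; ring
  have := image_le_of_deriv_right_le_deriv_boundary
    (fun t _ => (hasDerivAt_comp_add_smul hf x v t).continuousAt.continuousWithinAt)
    (fun t _ => (hasDerivAt_comp_add_smul hf x v t).hasDerivWithinAt) (by simp)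
    (fun t _ => (hB t).continuousAt.continuousWithinAt) (fun t _ => (hB t).hasDerivWithinAt)
    hbound (right_mem_Icc.2 zero_le_one)
  simpa [v] using this

lemma nonneg_of_forall_mem_Ioo_nonneg_add_mul {a b : ℝ}
    (h : ∀ t ∈ Ioo (0 : ℝ) 1, 0 ≤ a + t * b) : 0 ≤ a := by
  have hlim : Tendsto (fun t : ℝ => a + t * b) (𝓝[>] 0) (𝓝 a) := by
    have hcont : Continuous (fun t : ℝ => a + t * b) := by fun_prop
    exact (hcont.tendsto' 0 a (by simp)).mono_left nhdsWithin_le_nhds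
  refine ge_of_tendsto hlim ?_
  filter_upwards [Ioo_mem_nhdsGT zero_lt_one] with t ht using h t ht

lemma ConvexOn.prox_optimality {g : E → ℝ} (hg : ConvexOn ℝ univ g) {c : ℝ} {z p : E}
    (hp : ∀ y, c * ‖p - z‖ ^ 2 + g p ≤ c * ‖y - z‖ ^ 2 + g y) (y : E) :
    0 ≤ 2 * c * ⟪p - z, y - p⟫ + (g y - g p) := by
  refine nonneg_of_forall_mem_Ioo_nonneg_add_mul (b := c * ‖y - p‖ ^ 2) fun t ⟨ht0, ht1⟩ => ?_
  have hseg : p + t • (y - p) = (1 - t) • p + t • y := by module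
  have hconv : g (p + t • (y - p)) ≤ (1 - t) * g p + t * g y := by
    rw [hseg]
    exact hg.2 (mem_univ p) (mem_univ y) (by linarith) ht0.le (by ring)
  have hnorm : ‖p + t • (y - p) - z‖ ^ 2 =
      ‖p - z‖ ^ 2 + 2 * t * ⟪p - z, y - p⟫ + t ^ 2 * ‖y - p‖ ^ 2 := by
    rw [show p + t • (y - p) - z = (p - z) + t • (y - p) by abel, norm_add_sq_real,
      real_inner_smul_right, norm_smul, Real.norm_eq_abs, mul_pow, sq_abs]
    ring
  have hmin := hp (p + t • (y - p))
  rw [hnorm] at hmin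
  have : 0 ≤ t * (2 * c * ⟪p - z, y - p⟫ + (g y - g p) + t * (c * ‖y - p‖ ^ 2)) := by
    linear_combination hmin + hconv
  exact nonneg_of_mul_nonneg_right this ht0

lemma ConvexOn.prox_three_point {g : E → ℝ} (hg : ConvexOn ℝ univ g) {c : ℝ} {z p : E}
    (hp : ∀ y, c * ‖p - z‖ ^ 2 + g p ≤ c * ‖y - z‖ ^ 2 + g y) (y : E) :
    c * ‖p - z‖ ^ 2 + g p + c * ‖y - p‖ ^ 2 ≤ c * ‖y - z‖ ^ 2 + g y := by
  have hnorm : ‖y - z‖ ^ 2 = ‖p - z‖ ^ 2 + 2 * ⟪p - z, y - p⟫ + ‖y - p‖ ^ 2 := by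
    rw [show y - z = (p - z) + (y - p) by abel, norm_add_sq_real]
  rw [hnorm]
  linear_combination hg.prox_optimality hp y

lemma proxGrad_fundamental_inequality [CompleteSpace E] {f g : E → ℝ} {f' : E → E} {L lam : ℝ}
    (hf : ∀ x, HasGradientAt f (f' x) x) (hL : ∀ x y, ‖f' x - f' y‖ ≤ L * ‖x - y‖)
    (hg : ConvexOn ℝ univ g) (hlam : 0 < lam) (hlamL : lam * L ≤ 1) {x p : E}
    (hp : ∀ y, 1 / (2 * lam) * ‖p - (x - lam • f' x)‖ ^ 2 + g p ≤
      1 / (2 * lam) * ‖y - (x - lam • f' x)‖ ^ 2 + g y) (y : E) :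
    f p + g p + 1 / (2 * lam) * ‖y - p‖ ^ 2 ≤
      f x + ⟪f' x, y - x⟫ + g y + 1 / (2 * lam) * ‖y - x‖ ^ 2 := by
  set c := 1 / (2 * lam)
  have hc : 2 * lam * c = 1 := mul_one_div_cancel (by positivity)
  have hexpand (w : E) : ‖w - (x - lam • f' x)‖ ^ 2 =
      ‖w - x‖ ^ 2 + 2 * lam * ⟪f' x, w - x⟫ + lam ^ 2 * ‖f' x‖ ^ 2 := by
    rw [show w - (x - lam • f' x) = (w - x) + lam • f' x by abel, norm_add_sq_real,
      real_inner_smul_right, norm_smul, Real.norm_eq_abs, mul_pow, sq_abs, real_inner_comm]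
    ring
  have hthree := hg.prox_three_point hp y
  rw [hexpand, hexpand] at hthree
  have hdesc := le_add_inner_add_of_lipschitz_gradient hf hL x p
  have hLc : L / 2 * ‖p - x‖ ^ 2 ≤ c * ‖p - x‖ ^ 2 := by
    gcongr
    rw [le_div_iff₀ (by positivity)]
    linarith
  linear_combination hthree + hdesc + hLc + (⟪f' x, y - x⟫ - ⟪f' x, p - x⟫) * hc

lemma proxGrad_sub_le_one_sub_mul [CompleteSpace E] {f g : E → ℝ} {f' : E → E} {L μ lam : ℝ}
    (hf : ∀ x, HasGradientAt f (f' x) x) (hL : ∀ x y, ‖f' x - f' y‖ ≤ L * ‖x - y‖)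
    (hg : ConvexOn ℝ univ g) (hlam : 0 < lam) (hlamL : lam * L ≤ 1) (hμ : 0 ≤ μ)
    (hlamμ : lam * μ ≤ 1) {x p xstar : E}
    (hstrong : f x + ⟪f' x, xstar - x⟫ + μ / 2 * ‖xstar - x‖ ^ 2 ≤ f xstar)
    (hp : ∀ y, 1 / (2 * lam) * ‖p - (x - lam • f' x)‖ ^ 2 + g p ≤
      1 / (2 * lam) * ‖y - (x - lam • f' x)‖ ^ 2 + g y) :
    f p + g p - (f xstar + g xstar) ≤ (1 - lam * μ) * (f x + g x - (f xstar + g xstar)) := by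
  set θ := lam * μ
  have hθ : 0 ≤ θ := by positivity
  have hfund := proxGrad_fundamental_inequality hf hL hg hlam hlamL hp (x + θ • (xstar - x))
  have hgy : g (x + θ • (xstar - x)) ≤ (1 - θ) * g x + θ * g xstar := by
    rw [show x + θ • (xstar - x) = (1 - θ) • x + θ • xstar by module]
    exact hg.2 (mem_univ x) (mem_univ xstar) (by linarith) hθ (by ring)
  rw [add_sub_cancel_left, real_inner_smul_right, norm_smul, Real.norm_of_nonneg hθ,
    mul_pow] at hfund
  have hc : 1 / (2 * lam) * θ ^ 2 = θ * (μ / 2) := by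
    field_simp
    ring
  have hsq : 0 ≤ 1 / (2 * lam) * ‖x + θ • (xstar - x) - p‖ ^ 2 := by positivity
  linear_combination hfund + hgy + θ * hstrong + hsq + ‖xstar - x‖ ^ 2 * hc

end

theorem prox_gd_strongly_convex_one_step_rate_general {E : Type*} [NormedAddCommGroup E]
    [InnerProductSpace ℝ E] [CompleteSpace E]
    (f g : E → ℝ) (f' : E → E) (L μ : ℝ) (hμ : 0 < μ) (hμL : μ ≤ L)
    (hdiff : ∀ x, HasGradientAt f (f' x) x)
    (hsmooth : ∀ x y, ‖f' x - f' y‖ ≤ L * ‖x - y‖)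
    (hstrong : ∀ x y, f x + ⟪f' x, y - x⟫ + (μ / 2) * ‖y - x‖ ^ 2 ≤ f y)
    (hgconv : ConvexOn ℝ Set.univ g)
    (lam : ℝ) (hlam : 0 < lam) (hlamL : lam ≤ 1 / L)
    (F : E → ℝ) (hF : F = fun y => f y + g y)
    (xstar : E) (hmin : ∀ y, F xstar ≤ F y)
    (xk xk1 : E)
    (hprox : ∀ y : E,
      (1 / (2 * lam)) * ‖xk1 - (xk - lam • f' xk)‖ ^ 2 + g xk1 ≤
        (1 / (2 * lam)) * ‖y - (xk - lam • f' xk)‖ ^ 2 + g y) :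
    F xk1 - F xstar ≤ (1 + lam * μ / 4)⁻¹ * (F xk - F xstar) := by
  subst hF
  have hLpos : 0 < L := hμ.trans_le hμL
  have hlamL' : lam * L ≤ 1 := by
    rw [le_div_iff₀ hLpos] at hlamL
    linarith
  have hlamμ : lam * μ ≤ 1 := le_trans (by gcongr) hlamL'
  have hcoef : 1 - lam * μ ≤ (1 + lam * μ / 4)⁻¹ := by
    rw [← one_div, le_div_iff₀ (by positivity)]
    nlinarith [mul_pos hlam hμ]
  calc f xk1 + g xk1 - (f xstar + g xstar)
      ≤ (1 - lam * μ) * (f xk + g xk - (f xstar + g xstar)) :=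
        proxGrad_sub_le_one_sub_mul hdiff hsmooth hgconv hlam hlamL' hμ.le hlamμ
          (hstrong xk xstar) hprox
    _ ≤ (1 + lam * μ / 4)⁻¹ * (f xk + g xk - (f xstar + g xstar)) :=
        mul_le_mul_of_nonneg_right hcoef (sub_nonneg.2 (hmin xk))

theorem prox_gd_strongly_convex_one_step_rate {E : Type*} [NormedAddCommGroup E]
    [InnerProductSpace ℝ E] [CompleteSpace E]
    (f g : E → ℝ) (f' : E → E) (L μ : ℝ) (hμ : 0 < μ) (hμL : μ ≤ L)
    (hdiff : ∀ x, HasGradientAt f (f' x) x)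
    (hsmooth : ∀ x y, ‖f' x - f' y‖ ≤ L * ‖x - y‖)
    (hstrong : ∀ x y, f x + ⟪f' x, y - x⟫ + (μ / 2) * ‖y - x‖ ^ 2 ≤ f y)
    (hgconv : ConvexOn ℝ Set.univ g) (hgcont : Continuous g)
    (lam : ℝ) (hlam : 0 < lam) (hlamL : lam ≤ 1 / L)
    (F : E → ℝ) (hF : F = fun y => f y + g y)
    (xstar : E) (hmin : ∀ y, F xstar ≤ F y)
    (xk xk1 : E)
    (hprox : ∀ y : E,
      (1 / (2 * lam)) * ‖xk1 - (xk - lam • f' xk)‖ ^ 2 + g xk1 ≤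
        (1 / (2 * lam)) * ‖y - (xk - lam • f' xk)‖ ^ 2 + g y) :
    F xk1 - F xstar ≤ (1 + lam * μ / 4)⁻¹ * (F xk - F xstar) :=
  prox_gd_strongly_convex_one_step_rate_general f g f' L μ hμ hμL hdiff hsmooth hstrong hgconv lam
    hlam hlamL F hF xstar hmin xk xk1 hprox
end
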